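/- arXiv:1508.00929 — 2 statements merged into one kernel-verified Lean document; each statement's English description precedes it below -/
import Mathlib

section
/- Let B be the open unit disk in ℝ² and let f₁, f₂ ∈ L¹(B) be functions with fᵢ > 0 almost everywhere and ∫_B fᵢ = 1 for i = 1,2. Then there exist a unit vector θ ∈ S¹ and a real number a ∈ (-1,1) such that ∫_{x ∈ B : x·θ < a} f₁(x) dx = 1/2 and ∫_{x ∈ B : x·θ > a} f₂(x) dx = 1/2. -/
open MeasureTheory Metric
open scoped RealInnerProductSpace

/-!
Since `f₁ > 0`, the `f₁`-mass of `{x ∈ B | ⟪x, θ⟫ < a}` is strictly increasing in `a ∈ [-1, 1]`,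
so for every unit `θ` there is a unique median level `a(θ)`; it depends continuously on `θ`
because the mass is jointly continuous (lines are null sets), and `a(-θ) = -a(θ)`.
Along a path from `θ₀` to `-θ₀` on the unit circle, the `f₂`-mass below the `f₁`-median line
therefore runs from some `m` to `1 - m`, and takes the value `1/2` in between.
-/

open Set Filter

theorem continuous_of_monotone_of_unique_root {X : Type*} [TopologicalSpace X]
    {F : X → ℝ → ℝ} {A : X → ℝ} {y : ℝ} (hF : ∀ c, Continuous fun x => F x c)
    (hmono : ∀ x, Monotone (F x)) (hroot : ∀ x, F x (A x) = y)
    (huniq : ∀ x c, F x c = y → c = A x) : Continuous A := by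
  refine continuous_iff_continuousAt.2 fun x₀ => Metric.tendsto_nhds.2 fun ε hε => ?_
  have hlt : F x₀ (A x₀ - ε) < y :=
    ((hmono x₀ (by linarith)).trans_eq (hroot x₀)).lt_of_ne fun h => by
      linarith [huniq _ _ h]
  have hgt : y < F x₀ (A x₀ + ε) :=
    ((hroot x₀).symm.trans_le (hmono x₀ (by linarith))).lt_of_ne fun h => by
      linarith [huniq _ _ h.symm]
  filter_upwards [(hF _).continuousAt.eventually_lt continuousAt_const hlt,
    continuousAt_const.eventually_lt (hF _).continuousAt hgt] with x hx₁ hx₂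
  rw [Real.dist_eq, abs_sub_lt_iff]
  constructor
  · by_contra! h
    linarith [hmono x (show A x₀ + ε ≤ A x by linarith), hroot x]
  · by_contra! h
    linarith [hmono x (show A x ≤ A x₀ - ε by linarith), hroot x]

theorem setIntegral_pos_of_ae_pos {X : Type*} [MeasurableSpace X] {μ : Measure X} {s : Set X}
    {f : X → ℝ} (hμs : μ s ≠ 0) (hf : IntegrableOn f s μ)
    (hpos : ∀ᵐ x ∂μ.restrict s, 0 < f x) : 0 < ∫ x in s, f x ∂μ := by
  rw [integral_pos_iff_support_of_nonneg_ae (hpos.mono fun _ hx => hx.le) hf,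
    measure_congr (ae_eq_univ.2 (measure_eq_zero_iff_ae_notMem.2 (by
      filter_upwards [hpos] with x hx using not_not.2 hx.ne'))),
    Measure.restrict_apply_univ]
  exact pos_iff_ne_zero.2 hμs

noncomputable def massBelow {E : Type*} [NormedAddCommGroup E] [InnerProductSpace ℝ E]
    [MeasurableSpace E] (μ : Measure E) (f : E → ℝ) (s : Set E) (θ : E) (a : ℝ) : ℝ :=
  ∫ x in s ∩ {x | ⟪x, θ⟫ < a}, f x ∂μ

section

variable {E : Type*} [NormedAddCommGroup E] [InnerProductSpace ℝ E] {θ : E}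

theorem abs_inner_lt_one_of_mem_ball {x : E} (hx : x ∈ ball (0 : E) 1) (hθ : ‖θ‖ ≤ 1) :
    |⟪x, θ⟫| < 1 :=
  calc |⟪x, θ⟫| ≤ ‖x‖ * ‖θ‖ := abs_real_inner_le_norm x θ
    _ ≤ ‖x‖ := mul_le_of_le_one_right (norm_nonneg x) hθ
    _ < 1 := mem_ball_zero_iff.1 hx

variable [MeasurableSpace E] {μ : Measure E} {f : E → ℝ} {s : Set E}

theorem massBelow_neg (f : E → ℝ) (s : Set E) (θ : E) (a : ℝ) :
    massBelow μ f s (-θ) (-a) = ∫ x in s ∩ {x | a < ⟪x, θ⟫}, f x ∂μ := by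
  simp only [massBelow, inner_neg_right, neg_lt_neg_iff]

theorem massBelow_mono (hf : IntegrableOn f s μ) (hf₀ : 0 ≤ᵐ[μ.restrict s] f) (θ : E) :
    Monotone (massBelow μ f s θ) := fun _ _ hab =>
  setIntegral_mono_set (hf.mono_set inter_subset_left)
    (ae_restrict_of_ae_restrict_of_subset inter_subset_left hf₀)
    (inter_subset_inter_right s fun _ hx => lt_of_lt_of_le hx hab).eventuallyLE

theorem massBelow_ball_of_le_neg_one (hθ : ‖θ‖ ≤ 1) {a : ℝ} (ha : a ≤ -1) :
    massBelow μ f (ball 0 1) θ a = 0 := by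
  have hempty : ball (0 : E) 1 ∩ {x | ⟪x, θ⟫ < a} = ∅ := by
    refine eq_empty_of_forall_notMem fun x ⟨hx, (hxa : ⟪x, θ⟫ < a)⟩ => ?_
    linarith [(abs_lt.1 (abs_inner_lt_one_of_mem_ball hx hθ)).1]
  rw [massBelow, hempty, Measure.restrict_empty, integral_zero_measure]

theorem massBelow_ball_of_one_le (hθ : ‖θ‖ ≤ 1) {a : ℝ} (ha : 1 ≤ a) :
    massBelow μ f (ball 0 1) θ a = ∫ x in ball 0 1, f x ∂μ := by
  have hfull : ball (0 : E) 1 ∩ {x | ⟪x, θ⟫ < a} = ball 0 1 :=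
    inter_eq_left.2 fun x hx => (abs_lt.1 (abs_inner_lt_one_of_mem_ball hx hθ)).2.trans_le ha
  rw [massBelow, hfull]

theorem mem_Ioo_of_massBelow_ball_eq_half (hone : ∫ x in ball 0 1, f x ∂μ = 1) (hθ : ‖θ‖ ≤ 1)
    {a : ℝ} (ha : massBelow μ f (ball 0 1) θ a = 1 / 2) : a ∈ Ioo (-1 : ℝ) 1 := by
  constructor <;> by_contra! h
  · rw [massBelow_ball_of_le_neg_one hθ h] at ha
    norm_num at ha
  · rw [massBelow_ball_of_one_le hθ h, hone] at ha
    norm_num at ha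

variable [BorelSpace E]

theorem measurableSet_setOf_inner_lt (θ : E) (a : ℝ) : MeasurableSet {x : E | ⟪x, θ⟫ < a} :=
  measurableSet_lt (by fun_prop) measurable_const

theorem massBelow_ball_strictMonoOn [μ.IsOpenPosMeasure] (hf : IntegrableOn f (ball 0 1) μ)
    (hf₀ : ∀ᵐ x ∂μ.restrict (ball 0 1), 0 < f x) (hθ : ‖θ‖ = 1) :
    StrictMonoOn (massBelow μ f (ball 0 1) θ) (Icc (-1) 1) := by
  intro a ha b hb hab
  set t := ball (0 : E) 1 ∩ {x | ⟪x, θ⟫ < b}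
  have hsplit := integral_inter_add_sdiff (measurableSet_setOf_inner_lt θ a)
    (hf.mono_set (inter_subset_left : t ⊆ _))
  have hlow : t ∩ {x | ⟪x, θ⟫ < a} = ball 0 1 ∩ {x | ⟪x, θ⟫ < a} := by
    have hab' : {x | ⟪x, θ⟫ < b} ∩ {x | ⟪x, θ⟫ < a} = {x | ⟪x, θ⟫ < a} :=
      inter_eq_right.2 fun x (hx : ⟪x, θ⟫ < a) => hx.trans hab
    rw [inter_assoc, hab']
  have hslab : μ (t \ {x | ⟪x, θ⟫ < a}) ≠ 0 := by
    have hopen : IsOpen (ball (0 : E) 1 ∩ (fun x => ⟪x, θ⟫) ⁻¹' Ioo a b) :=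
      isOpen_ball.inter (isOpen_Ioo.preimage (by fun_prop))
    have hmid : ((a + b) / 2) • θ ∈ ball (0 : E) 1 ∩ (fun x => ⟪x, θ⟫) ⁻¹' Ioo a b := by
      simp only [mem_inter_iff, mem_ball_zero_iff, norm_smul, hθ, mul_one, Real.norm_eq_abs,
        mem_preimage, real_inner_smul_left, real_inner_self_eq_norm_sq, one_pow, mem_Ioo, abs_lt]
      constructor <;> constructor <;> linarith [ha.1, hb.2]
    refine fun h => hopen.measure_ne_zero μ ⟨_, hmid⟩ (measure_mono_null ?_ h)
    exact fun x hx => ⟨⟨hx.1, hx.2.2⟩, not_lt.2 hx.2.1.le⟩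
  have hpos := setIntegral_pos_of_ae_pos hslab (hf.mono_set (sdiff_subset.trans inter_subset_left))
    (ae_restrict_of_ae_restrict_of_subset (sdiff_subset.trans inter_subset_left) hf₀)
  rw [hlow] at hsplit
  simp only [massBelow]
  linarith

variable [FiniteDimensional ℝ E] [μ.IsAddHaarMeasure]

theorem measure_setOf_inner_eq (hθ : θ ≠ 0) (a : ℝ) : μ {x | ⟪x, θ⟫ = a} = 0 := by
  set x₀ : E := (a / ‖θ‖ ^ 2) • θ
  have hx₀ : ⟪θ, x₀⟫ = a := by
    rw [real_inner_smul_right, real_inner_self_eq_norm_sq]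
    field_simp [norm_ne_zero_iff.2 hθ]
  have hker : {x | ⟪x, θ⟫ = a} = (-x₀ + ·) ⁻¹' (LinearMap.ker (innerₛₗ ℝ θ) : Set E) := by
    ext x
    simp [inner_add_right, real_inner_comm, hx₀, neg_add_eq_zero, eq_comm]
  rw [hker, measure_preimage_add]
  refine Measure.addHaar_submodule μ _ fun h => hθ ?_
  simpa using (h ▸ Submodule.mem_top : θ ∈ LinearMap.ker (innerₛₗ ℝ θ))

theorem ae_inner_ne (hθ : θ ≠ 0) (a : ℝ) : ∀ᵐ x ∂μ, ⟪x, θ⟫ ≠ a :=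
  measure_eq_zero_iff_ae_notMem.1 (measure_setOf_inner_eq hθ a)

theorem massBelow_add_massBelow_neg (hf : IntegrableOn f s μ) (hθ : θ ≠ 0) (a : ℝ) :
    massBelow μ f s θ a + massBelow μ f s (-θ) (-a) = ∫ x in s, f x ∂μ := by
  rw [← integral_inter_add_sdiff (measurableSet_setOf_inner_lt θ a) hf, massBelow_neg]
  congr 1
  refine setIntegral_congr_set ?_
  filter_upwards [ae_inner_ne hθ a] with x hx
  exact propext <| and_congr_right fun _ => ⟨fun h (h' : ⟪x, θ⟫ < a) => lt_asymm h h',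
    fun (h : ¬⟪x, θ⟫ < a) => (not_lt.1 h).lt_of_ne hx.symm⟩

theorem continuousAt_massBelow (hf : IntegrableOn f s μ) (hθ : θ ≠ 0) (a : ℝ) :
    ContinuousAt (fun p : E × ℝ => massBelow μ f s p.1 p.2) (θ, a) := by
  simp only [massBelow, ← setIntegral_indicator (measurableSet_setOf_inner_lt _ _)]
  refine continuousAt_of_dominated (bound := fun x => ‖f x‖)
    (.of_forall fun p => hf.aestronglyMeasurable.indicator (measurableSet_setOf_inner_lt _ _))
    (.of_forall fun p => ae_of_all _ fun x => norm_indicator_le_norm_self f x) hf.norm ?_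
  filter_upwards [ae_restrict_of_ae (ae_inner_ne hθ a)] with x hx
  -- the integrand is locally constant in `(θ, a)` off the line `⟪x, θ⟫ = a`
  rcases hx.lt_or_gt with hlt | hgt
  · refine ContinuousAt.congr (f := fun _ => f x) continuousAt_const ?_
    filter_upwards [(continuous_const.inner continuous_fst).continuousAt.eventually_lt
      continuous_snd.continuousAt hlt] with p hp
    exact (Set.indicator_of_mem (s := {y : E | ⟪y, p.1⟫ < p.2}) hp f).symm
  · refine ContinuousAt.congr (f := fun _ => 0) continuousAt_const ?_
    filter_upwards [continuous_snd.continuousAt.eventually_lt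
      (continuous_const.inner continuous_fst).continuousAt hgt] with p hp
    exact (Set.indicator_of_notMem (s := {y : E | ⟪y, p.1⟫ < p.2}) (not_lt.2 hp.le) f).symm

theorem continuous_massBelow_comp {X : Type*} [TopologicalSpace X] {γ : X → E} {A : X → ℝ}
    (hf : IntegrableOn f s μ) (hγ : Continuous γ) (hγ₀ : ∀ t, γ t ≠ 0) (hA : Continuous A) :
    Continuous fun t => massBelow μ f s (γ t) (A t) :=
  continuous_iff_continuousAt.2 fun t =>
    (continuousAt_massBelow hf (hγ₀ t) (A t)).comp (f := fun t => (γ t, A t))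
      (hγ.prodMk hA).continuousAt

theorem existsUnique_massBelow_ball_eq_half (hf : IntegrableOn f (ball 0 1) μ)
    (hf₀ : ∀ᵐ x ∂μ.restrict (ball 0 1), 0 < f x) (hone : ∫ x in ball 0 1, f x ∂μ = 1)
    (hθ : ‖θ‖ = 1) : ∃! a, massBelow μ f (ball 0 1) θ a = 1 / 2 := by
  have hθ₀ : θ ≠ 0 := norm_ne_zero_iff.1 (by simp [hθ])
  obtain ⟨a, -, ha⟩ : 1 / 2 ∈ massBelow μ f (ball 0 1) θ '' Icc (-1) 1 := by
    refine intermediate_value_Icc (by norm_num)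
      (continuous_massBelow_comp hf continuous_const (fun _ => hθ₀) continuous_id').continuousOn ?_
    rw [massBelow_ball_of_le_neg_one hθ.le le_rfl, massBelow_ball_of_one_le hθ.le le_rfl, hone]
    norm_num
  refine ⟨a, ha, fun c hc => ?_⟩
  have hIcc {d} (hd : massBelow μ f (ball 0 1) θ d = 1 / 2) : d ∈ Icc (-1 : ℝ) 1 :=
    Ioo_subset_Icc_self (mem_Ioo_of_massBelow_ball_eq_half hone hθ.le hd)
  exact (massBelow_ball_strictMonoOn hf hf₀ hθ).injOn (hIcc hc) (hIcc ha) (hc.trans ha.symm)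

theorem exists_continuous_massBelow_ball_eq_half {X : Type*} [TopologicalSpace X] {γ : X → E}
    (hf : IntegrableOn f (ball 0 1) μ) (hf₀ : ∀ᵐ x ∂μ.restrict (ball 0 1), 0 < f x)
    (hone : ∫ x in ball 0 1, f x ∂μ = 1) (hγ : Continuous γ) (hγ₁ : ∀ t, ‖γ t‖ = 1) :
    ∃ A : X → ℝ, Continuous A ∧ ∀ t, massBelow μ f (ball 0 1) (γ t) (A t) = 1 / 2 := by
  choose A hA huniq using fun t => existsUnique_massBelow_ball_eq_half hf hf₀ hone (hγ₁ t)
  refine ⟨A, continuous_of_monotone_of_unique_root (fun c => ?_)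
    (fun t => massBelow_mono hf (hf₀.mono fun _ hx => hx.le) _) hA huniq, hA⟩
  exact continuous_massBelow_comp hf hγ (fun t => norm_ne_zero_iff.1 (by simp [hγ₁ t]))
    continuous_const

theorem exists_line_bisecting_ball (hE : 1 < Module.rank ℝ E) {f₁ f₂ : E → ℝ}
    (h₁int : IntegrableOn f₁ (ball 0 1) μ) (h₂int : IntegrableOn f₂ (ball 0 1) μ)
    (h₁pos : ∀ᵐ x ∂μ.restrict (ball 0 1), 0 < f₁ x)
    (h₁one : ∫ x in ball 0 1, f₁ x ∂μ = 1) (h₂one : ∫ x in ball 0 1, f₂ x ∂μ = 1) :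
    ∃ θ : E, ‖θ‖ = 1 ∧ ∃ a ∈ Ioo (-1 : ℝ) 1, massBelow μ f₁ (ball 0 1) θ a = 1 / 2 ∧
      ∫ x in ball 0 1 ∩ {x | a < ⟪x, θ⟫}, f₂ x ∂μ = 1 / 2 := by
  have : Nontrivial E := rank_pos_iff_nontrivial.1 (zero_lt_one.trans hE)
  obtain ⟨θ₀, hθ₀⟩ := exists_norm_eq E zero_le_one
  have hjoin : JoinedIn (sphere (0 : E) 1) θ₀ (-θ₀) :=
    (isPathConnected_sphere hE 0 zero_le_one).joinedIn θ₀ (by simpa using hθ₀) (-θ₀)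
      (by simpa using hθ₀)
  let γ := hjoin.somePath
  have hγ₁ (t : unitInterval) : ‖γ t‖ = 1 := by simpa using hjoin.somePath_mem t
  have hγ₀ (t : unitInterval) : γ t ≠ 0 := norm_ne_zero_iff.1 (by simp [hγ₁ t])
  obtain ⟨A, hA, hmed⟩ :=
    exists_continuous_massBelow_ball_eq_half h₁int h₁pos h₁one γ.continuous hγ₁
  -- the median line of `f₁` in direction `-θ₀` is the one in direction `θ₀`, with sides swapped
  have hA₁ : A 1 = -A 0 := by
    refine (existsUnique_massBelow_ball_eq_half h₁int h₁pos h₁one (hγ₁ 1)).unique (hmed 1) ?_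
    have hsplit := massBelow_add_massBelow_neg h₁int (hγ₀ 0) (A 0)
    have h₀ := hmed 0
    rw [γ.source] at hsplit h₀
    rw [γ.target]
    linarith
  set g := fun t : unitInterval => massBelow μ f₂ (ball 0 1) (γ t) (A t)
  have hg : Continuous g := continuous_massBelow_comp h₂int γ.continuous hγ₀ hA
  have hg₁ : g 1 = 1 - g 0 := by
    have hsplit := massBelow_add_massBelow_neg h₂int (hγ₀ 0) (A 0)
    rw [γ.source] at hsplit
    simp only [g, hA₁, γ.source, γ.target]
    linarith
  obtain ⟨t, ht⟩ : ∃ t, g t = 1 / 2 := by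
    rcases le_total (g 0) (1 / 2) with h | h
    · exact intermediate_value_univ 0 1 hg ⟨h, by linarith⟩
    · exact intermediate_value_univ 1 0 hg ⟨by linarith, h⟩
  refine ⟨γ t, hγ₁ t, A t, mem_Ioo_of_massBelow_ball_eq_half h₁one (hγ₁ t).le (hmed t),
    hmed t, ?_⟩
  rw [← massBelow_neg]
  linarith [massBelow_add_massBelow_neg h₂int (hγ₀ t) (A t)]

end

theorem stmt0_general (f₁ f₂ : EuclideanSpace ℝ (Fin 2) → ℝ)
    (h₁int : IntegrableOn f₁ (ball (0 : EuclideanSpace ℝ (Fin 2)) 1))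
    (h₂int : IntegrableOn f₂ (ball (0 : EuclideanSpace ℝ (Fin 2)) 1))
    (h₁pos : ∀ᵐ x ∂(volume.restrict (ball (0 : EuclideanSpace ℝ (Fin 2)) 1)), 0 < f₁ x)
    (h₁one : ∫ x in ball (0 : EuclideanSpace ℝ (Fin 2)) 1, f₁ x = 1)
    (h₂one : ∫ x in ball (0 : EuclideanSpace ℝ (Fin 2)) 1, f₂ x = 1) :
    ∃ θ : EuclideanSpace ℝ (Fin 2), ‖θ‖ = 1 ∧ ∃ a ∈ Set.Ioo (-1 : ℝ) 1,
      (∫ x in {x : EuclideanSpace ℝ (Fin 2) | x ∈ ball (0 : EuclideanSpace ℝ (Fin 2)) 1 ∧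
          ⟪x, θ⟫ < a}, f₁ x) = 1 / 2 ∧
      (∫ x in {x : EuclideanSpace ℝ (Fin 2) | x ∈ ball (0 : EuclideanSpace ℝ (Fin 2)) 1 ∧
          a < ⟪x, θ⟫}, f₂ x) = 1 / 2 := by
  have hrank : 1 < Module.rank ℝ (EuclideanSpace ℝ (Fin 2)) := by
    rw [← Module.finrank_eq_rank, finrank_euclideanSpace_fin]
    norm_num
  exact exists_line_bisecting_ball hrank h₁int h₂int h₁pos h₁one h₂one

/-- A single line `{x · θ = a}` simultaneously bisects the mass of `f₁` on one side and
of `f₂` on the other side, for a.e.-positive densities of total mass `1` on the unit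
disk `B ⊂ ℝ²`. -/
theorem stmt0 (f₁ f₂ : EuclideanSpace ℝ (Fin 2) → ℝ)
    (h₁int : IntegrableOn f₁ (ball (0 : EuclideanSpace ℝ (Fin 2)) 1))
    (h₂int : IntegrableOn f₂ (ball (0 : EuclideanSpace ℝ (Fin 2)) 1))
    (h₁pos : ∀ᵐ x ∂(volume.restrict (ball (0 : EuclideanSpace ℝ (Fin 2)) 1)), 0 < f₁ x)
    (h₂pos : ∀ᵐ x ∂(volume.restrict (ball (0 : EuclideanSpace ℝ (Fin 2)) 1)), 0 < f₂ x)
    (h₁one : ∫ x in ball (0 : EuclideanSpace ℝ (Fin 2)) 1, f₁ x = 1)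
    (h₂one : ∫ x in ball (0 : EuclideanSpace ℝ (Fin 2)) 1, f₂ x = 1) :
    ∃ θ : EuclideanSpace ℝ (Fin 2), ‖θ‖ = 1 ∧ ∃ a ∈ Set.Ioo (-1 : ℝ) 1,
      (∫ x in {x : EuclideanSpace ℝ (Fin 2) | x ∈ ball (0 : EuclideanSpace ℝ (Fin 2)) 1 ∧
          ⟪x, θ⟫ < a}, f₁ x) = 1 / 2 ∧
      (∫ x in {x : EuclideanSpace ℝ (Fin 2) | x ∈ ball (0 : EuclideanSpace ℝ (Fin 2)) 1 ∧
          a < ⟪x, θ⟫}, f₂ x) = 1 / 2 :=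
  stmt0_general f₁ f₂ h₁int h₂int h₁pos h₁one h₂one
end

section
/- Let ρ₁, ρ₂ > 0, α₁₁, α₁₂, α₂₁, α₂₂ > -1, and suppose τ'₁, τ'₂ are real numbers with 0 < τ'ᵢ < ρᵢ. If the four inequalities ρ₁² + ρ₂² - ρ₁ρ₂ - 4π(1+α₁₁)ρ₁ - 4π(1+α₂₁)ρ₂ ≤ 0, ρ₁² + ρ₂² - ρ₁ρ₂ - 4π(1+α₁₂)ρ₁ - 4π(1+α₂₂)ρ₂ ≥ 0, ρ₁² - ρ₂² - 4π(1+α₁₁)ρ₁ + 4π(1+α₂₂)ρ₂ ≤ 0, ρ₁² - ρ₂² - 4π(1+α₁₂)ρ₁ + 4π(1+α₂₁)ρ₂ ≥ 0 hold with at least one strict, then the identity ρ₁² + ρ₂² - ρ₁ρ₂ - 4π(1+α₁₁)ρ₁ - 4π(1+α₂₁)ρ₂ + 4π(2+α₁₁+α₁₂ - ρ₁/(2π) + ρ₂/(4π))τ'₁ + 4π(2+α₂₁+α₂₂ - ρ₂/(2π) + ρ₁/(4π))τ'₂ = 0 cannot hold. -/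
open Real

/-!
The left-hand side of the Pohožaev identity is affine in `(τ'₁, τ'₂)`, and its values at the four
corners of the rectangle `[0, ρ₁] × [0, ρ₂]` are exactly the four expressions of the hypotheses,
with signs making each corner value nonpositive and one of them negative. An affine function is
the bilinear interpolation of its corner values, and an interior point gives every corner a
positive weight, so the left-hand side is negative.
-/

theorem affine_neg_of_corners_nonpos {c a b ρ₁ ρ₂ τ₁ τ₂ : ℝ}
    (hτ₁ : 0 < τ₁) (hτ₁' : τ₁ < ρ₁) (hτ₂ : 0 < τ₂) (hτ₂' : τ₂ < ρ₂)
    (h₀₀ : c ≤ 0) (h₁₀ : c + a * ρ₁ ≤ 0) (h₀₁ : c + b * ρ₂ ≤ 0) (h₁₁ : c + a * ρ₁ + b * ρ₂ ≤ 0)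
    (hstrict : c < 0 ∨ c + a * ρ₁ < 0 ∨ c + b * ρ₂ < 0 ∨ c + a * ρ₁ + b * ρ₂ < 0) :
    c + a * τ₁ + b * τ₂ < 0 := by
  have hσ₁ : 0 < ρ₁ - τ₁ := sub_pos.mpr hτ₁'
  have hσ₂ : 0 < ρ₂ - τ₂ := sub_pos.mpr hτ₂'
  have interpolation : ρ₁ * ρ₂ * (c + a * τ₁ + b * τ₂) =
      (ρ₁ - τ₁) * (ρ₂ - τ₂) * c + τ₁ * (ρ₂ - τ₂) * (c + a * ρ₁)
        + (ρ₁ - τ₁) * τ₂ * (c + b * ρ₂) + τ₁ * τ₂ * (c + a * ρ₁ + b * ρ₂) := by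
    ring
  have t₀₀ := mul_nonpos_of_nonneg_of_nonpos (mul_pos hσ₁ hσ₂).le h₀₀
  have t₁₀ := mul_nonpos_of_nonneg_of_nonpos (mul_pos hτ₁ hσ₂).le h₁₀
  have t₀₁ := mul_nonpos_of_nonneg_of_nonpos (mul_pos hσ₁ hτ₂).le h₀₁
  have t₁₁ := mul_nonpos_of_nonneg_of_nonpos (mul_pos hτ₁ hτ₂).le h₁₁
  have hsum : ρ₁ * ρ₂ * (c + a * τ₁ + b * τ₂) < 0 := by
    rw [interpolation]
    rcases hstrict with h | h | h | h
    · linarith [mul_neg_of_pos_of_neg (mul_pos hσ₁ hσ₂) h]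
    · linarith [mul_neg_of_pos_of_neg (mul_pos hτ₁ hσ₂) h]
    · linarith [mul_neg_of_pos_of_neg (mul_pos hσ₁ hτ₂) h]
    · linarith [mul_neg_of_pos_of_neg (mul_pos hτ₁ hτ₂) h]
  exact neg_of_mul_neg_right hsum (mul_pos (hτ₁.trans hτ₁') (hτ₂.trans hτ₂')).le

theorem stmt5_general (ρ₁ ρ₂ α₁₁ α₁₂ α₂₁ α₂₂ τ'₁ τ'₂ : ℝ)
    (hτ₁ : 0 < τ'₁) (hτ₁' : τ'₁ < ρ₁) (hτ₂ : 0 < τ'₂) (hτ₂' : τ'₂ < ρ₂)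
    (h1 : ρ₁ ^ 2 + ρ₂ ^ 2 - ρ₁ * ρ₂ - 4 * π * (1 + α₁₁) * ρ₁ - 4 * π * (1 + α₂₁) * ρ₂ ≤ 0)
    (h2 : ρ₁ ^ 2 + ρ₂ ^ 2 - ρ₁ * ρ₂ - 4 * π * (1 + α₁₂) * ρ₁ - 4 * π * (1 + α₂₂) * ρ₂ ≥ 0)
    (h3 : ρ₁ ^ 2 - ρ₂ ^ 2 - 4 * π * (1 + α₁₁) * ρ₁ + 4 * π * (1 + α₂₂) * ρ₂ ≤ 0)
    (h4 : ρ₁ ^ 2 - ρ₂ ^ 2 - 4 * π * (1 + α₁₂) * ρ₁ + 4 * π * (1 + α₂₁) * ρ₂ ≥ 0)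
    (hstrict :
      ρ₁ ^ 2 + ρ₂ ^ 2 - ρ₁ * ρ₂ - 4 * π * (1 + α₁₁) * ρ₁ - 4 * π * (1 + α₂₁) * ρ₂ < 0 ∨
      ρ₁ ^ 2 + ρ₂ ^ 2 - ρ₁ * ρ₂ - 4 * π * (1 + α₁₂) * ρ₁ - 4 * π * (1 + α₂₂) * ρ₂ > 0 ∨
      ρ₁ ^ 2 - ρ₂ ^ 2 - 4 * π * (1 + α₁₁) * ρ₁ + 4 * π * (1 + α₂₂) * ρ₂ < 0 ∨
      ρ₁ ^ 2 - ρ₂ ^ 2 - 4 * π * (1 + α₁₂) * ρ₁ + 4 * π * (1 + α₂₁) * ρ₂ > 0) :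
    ¬ (ρ₁ ^ 2 + ρ₂ ^ 2 - ρ₁ * ρ₂ - 4 * π * (1 + α₁₁) * ρ₁ - 4 * π * (1 + α₂₁) * ρ₂
        + 4 * π * (2 + α₁₁ + α₁₂ - ρ₁ / (2 * π) + ρ₂ / (4 * π)) * τ'₁
        + 4 * π * (2 + α₂₁ + α₂₂ - ρ₂ / (2 * π) + ρ₁ / (4 * π)) * τ'₂ = 0) := by
  have hπ : π ≠ 0 := pi_ne_zero
  have hslope₁ : 4 * π * (2 + α₁₁ + α₁₂ - ρ₁ / (2 * π) + ρ₂ / (4 * π))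
      = 4 * π * (2 + α₁₁ + α₁₂) - 2 * ρ₁ + ρ₂ := by
    field_simp
    ring
  have hslope₂ : 4 * π * (2 + α₂₁ + α₂₂ - ρ₂ / (2 * π) + ρ₁ / (4 * π))
      = 4 * π * (2 + α₂₁ + α₂₂) - 2 * ρ₂ + ρ₁ := by
    field_simp
    ring
  rw [hslope₁, hslope₂]
  refine (affine_neg_of_corners_nonpos hτ₁ hτ₁' hτ₂ hτ₂' h1 ?_ ?_ ?_ ?_).ne
  · linarith
  · linarith
  · linarith
  · rcases hstrict with h | h | h | h
    · exact Or.inl h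
    · exact Or.inr (Or.inr (Or.inr (by linarith)))
    · exact Or.inr (Or.inr (Or.inl (by linarith)))
    · exact Or.inr (Or.inl (by linarith))

/-- Algebraic core of the nonexistence result on the sphere with two antipodal
singularities: if the four inequalities hold with at least one strict, and
`0 < τ'ᵢ < ρᵢ`, then the Pohožaev identity cannot hold. -/
theorem stmt5 (ρ₁ ρ₂ α₁₁ α₁₂ α₂₁ α₂₂ τ'₁ τ'₂ : ℝ)
    (hρ₁ : 0 < ρ₁) (hρ₂ : 0 < ρ₂)
    (hα₁₁ : -1 < α₁₁) (hα₁₂ : -1 < α₁₂) (hα₂₁ : -1 < α₂₁) (hα₂₂ : -1 < α₂₂)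
    (hτ₁ : 0 < τ'₁) (hτ₁' : τ'₁ < ρ₁) (hτ₂ : 0 < τ'₂) (hτ₂' : τ'₂ < ρ₂)
    (h1 : ρ₁ ^ 2 + ρ₂ ^ 2 - ρ₁ * ρ₂ - 4 * π * (1 + α₁₁) * ρ₁ - 4 * π * (1 + α₂₁) * ρ₂ ≤ 0)
    (h2 : ρ₁ ^ 2 + ρ₂ ^ 2 - ρ₁ * ρ₂ - 4 * π * (1 + α₁₂) * ρ₁ - 4 * π * (1 + α₂₂) * ρ₂ ≥ 0)
    (h3 : ρ₁ ^ 2 - ρ₂ ^ 2 - 4 * π * (1 + α₁₁) * ρ₁ + 4 * π * (1 + α₂₂) * ρ₂ ≤ 0)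
    (h4 : ρ₁ ^ 2 - ρ₂ ^ 2 - 4 * π * (1 + α₁₂) * ρ₁ + 4 * π * (1 + α₂₁) * ρ₂ ≥ 0)
    (hstrict :
      ρ₁ ^ 2 + ρ₂ ^ 2 - ρ₁ * ρ₂ - 4 * π * (1 + α₁₁) * ρ₁ - 4 * π * (1 + α₂₁) * ρ₂ < 0 ∨
      ρ₁ ^ 2 + ρ₂ ^ 2 - ρ₁ * ρ₂ - 4 * π * (1 + α₁₂) * ρ₁ - 4 * π * (1 + α₂₂) * ρ₂ > 0 ∨
      ρ₁ ^ 2 - ρ₂ ^ 2 - 4 * π * (1 + α₁₁) * ρ₁ + 4 * π * (1 + α₂₂) * ρ₂ < 0 ∨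
      ρ₁ ^ 2 - ρ₂ ^ 2 - 4 * π * (1 + α₁₂) * ρ₁ + 4 * π * (1 + α₂₁) * ρ₂ > 0) :
    ¬ (ρ₁ ^ 2 + ρ₂ ^ 2 - ρ₁ * ρ₂ - 4 * π * (1 + α₁₁) * ρ₁ - 4 * π * (1 + α₂₁) * ρ₂
        + 4 * π * (2 + α₁₁ + α₁₂ - ρ₁ / (2 * π) + ρ₂ / (4 * π)) * τ'₁
        + 4 * π * (2 + α₂₁ + α₂₂ - ρ₂ / (2 * π) + ρ₁ / (4 * π)) * τ'₂ = 0) :=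
  stmt5_general ρ₁ ρ₂ α₁₁ α₁₂ α₂₁ α₂₂ τ'₁ τ'₂ hτ₁ hτ₁' hτ₂ hτ₂' h1 h2 h3 h4 hstrict
end
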